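/- Let X be a compact Hausdorff topological space and let T : X → X be a surjective local homeomorphism. Then there exist a natural number N and continuous functions ψ₁, …, ψ_N : X → ℂ such that for all x, y ∈ X with T(x) = T(y): ∑ᵢ₌₁^N ψᵢ(x)·conj(ψᵢ(y)) equals card(T⁻¹(T(x))) when x = y, and equals 0 when x ≠ y. (Such a family {ψᵢ} is a normalized tight frame, or quasi-basis, for the Deaconu C*-correspondence of (X, T): every continuous ξ : X → ℂ satisfies ξ(x) = ∑ᵢ ψᵢ(x)·(1/card(T⁻¹(Tx)))·∑_{T(y)=T(x)} conj(ψᵢ(y)) ξ(y).) -/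

import Mathlib

open ComplexConjugate Set Filter Topology

/-!
A local homeomorphism `T` of a compact Hausdorff space is a covering map, so its fibers are
finite and `c x = card (T⁻¹(T x))` is locally constant, hence continuous. Take a partition of
unity `fᵢ` subordinate to a finite open cover on whose members `T` is injective, and put
`ψᵢ = √(c fᵢ)`. Two distinct points of a fiber never lie in the support of the same `fᵢ`, so the
off-diagonal sums vanish, while `∑ fᵢ = 1` gives `c` on the diagonal. The reconstruction formula
follows by exchanging the sum over `i` with the (finite) sum over the fiber.
-/

section Covering

variable {E X : Type*} [TopologicalSpace E] [TopologicalSpace X] {f : E → X}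

theorem IsEvenlyCovered.eventually_natCard_fiber_eq {x : X} {I : Type*} [TopologicalSpace I]
    (h : IsEvenlyCovered f x I) : ∀ᶠ x' in 𝓝 x, Nat.card (f ⁻¹' {x'}) = Nat.card I := by
  obtain ⟨hI, U, hxU, hU, hfU, H, hH⟩ := h
  filter_upwards [hU.mem_nhds hxU] with x' hx'
  exact Nat.card_congr (IsEvenlyCovered.fiberHomeomorph ⟨hI, U, hx', hU, hfU, H, hH⟩).toEquiv.symm

theorem IsCoveringMap.isLocallyConstant_natCard_fiber (hf : IsCoveringMap f) :
    IsLocallyConstant fun x ↦ Nat.card (f ⁻¹' {x}) :=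
  (IsLocallyConstant.iff_eventually_eq _).2 fun x ↦ (hf x).eventually_natCard_fiber_eq

end Covering

namespace IsLocalHomeomorph

variable {E X : Type*} [TopologicalSpace E] [TopologicalSpace X] [CompactSpace E] [T2Space E]
  [T2Space X] {f : E → X}

theorem finite_fiber (hf : IsLocalHomeomorph f) (x : X) : (f ⁻¹' {x}).Finite :=
  (isClosed_singleton.preimage hf.continuous).isCompact.finite <|
    isDiscrete_iff_discreteTopology.2 (isLocalHomeomorph_iff_isCoveringMap.1 hf x).1

theorem continuous_natCard_fiber (hf : IsLocalHomeomorph f) :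
    Continuous fun e ↦ (Nat.card (f ⁻¹' {f e}) : ℝ) :=
  (((isLocalHomeomorph_iff_isCoveringMap.1 hf).isLocallyConstant_natCard_fiber.comp_continuous
    hf.continuous).comp ((↑) : ℕ → ℝ)).continuous

end IsLocalHomeomorph

theorem exists_fin_partitionOfUnity_subordinate {X : Type*} [TopologicalSpace X] [CompactSpace X]
    [T2Space X] (U : X → Set X) (hU : ∀ x, IsOpen (U x)) (hxU : ∀ x, x ∈ U x) :
    ∃ (N : ℕ) (f : PartitionOfUnity (Fin N) X univ), ∀ i, ∃ x, tsupport (f i) ⊆ U x := by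
  obtain ⟨t, ht⟩ := isCompact_univ.elim_finite_subcover U hU fun x _ ↦ mem_iUnion.2 ⟨x, hxU x⟩
  have hcover : univ ⊆ ⋃ i, U (t.equivFin.symm i) := fun x hx ↦ by
    obtain ⟨a, ha, hxa⟩ := mem_iUnion₂.1 (ht hx)
    exact mem_iUnion.2 ⟨t.equivFin ⟨a, ha⟩, by simpa using hxa⟩
  obtain ⟨f, hf⟩ := PartitionOfUnity.exists_isSubordinate isClosed_univ _ (fun _ ↦ hU _) hcover
  exact ⟨_, f, fun i ↦ ⟨_, hf i⟩⟩

theorem exists_frame_of_isLocallyInjective {X Y : Type*} [TopologicalSpace X] [CompactSpace X]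
    [T2Space X] {T : X → Y} (hT : IsLocallyInjective T) {c : X → ℝ} (hc : Continuous c)
    (hc₀ : ∀ x, 0 ≤ c x) :
    ∃ (N : ℕ) (ψ : Fin N → C(X, ℂ)), (∀ x, ∑ i, ψ i x * conj (ψ i x) = c x) ∧
      ∀ x y, T x = T y → x ≠ y → ∑ i, ψ i x * conj (ψ i y) = 0 := by
  choose U hU hxU hinj using hT
  obtain ⟨N, f, hf⟩ := exists_fin_partitionOfUnity_subordinate U hU hxU
  refine ⟨N, fun i ↦ ⟨fun x ↦ (√(c x * f i x) : ℂ), by fun_prop⟩, fun x ↦ ?_,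
    fun x y hxy hne ↦ Finset.sum_eq_zero fun i _ ↦ ?_⟩
  · have hsum : ∑ i, f i x = 1 := by
      simpa [finsum_eq_sum_of_fintype] using f.sum_eq_one (mem_univ x)
    simp only [ContinuousMap.coe_mk, Complex.conj_ofReal, ← Complex.ofReal_mul,
      Real.mul_self_sqrt (mul_nonneg (hc₀ x) (f.nonneg _ x)), ← Complex.ofReal_sum,
      ← Finset.mul_sum, hsum, mul_one]
  · have hzero : f i x = 0 ∨ f i y = 0 := by
      by_contra! h
      obtain ⟨z, hz⟩ := hf i
      exact hne (hinj z (hz (subset_tsupport _ h.1)) (hz (subset_tsupport _ h.2)) hxy)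
    rcases hzero with h | h <;> simp [h]

theorem eq_sum_mul_inv_mul_finsum_of_frame {X ι : Type*} [Fintype ι] {S : Set X} (hS : S.Finite)
    {x : X} (hx : x ∈ S) (ψ : ι → X → ℂ) {c : ℂ} (hc : c ≠ 0)
    (hψx : ∑ i, ψ i x * conj (ψ i x) = c)
    (hψ : ∀ y ∈ S, y ≠ x → ∑ i, ψ i x * conj (ψ i y) = 0) (ξ : X → ℂ) :
    ξ x = ∑ i, ψ i x * c⁻¹ * ∑ᶠ y ∈ S, conj (ψ i y) * ξ y := by
  calc ξ x = c⁻¹ * ∑ y ∈ hS.toFinset, (∑ i, ψ i x * conj (ψ i y)) * ξ y := by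
        rw [Finset.sum_eq_single_of_mem x (by simpa using hx) fun y hy hne ↦ by
          rw [hψ y (by simpa using hy) hne, zero_mul], hψx, inv_mul_cancel_left₀ hc]
    _ = ∑ i, ψ i x * c⁻¹ * ∑ᶠ y ∈ S, conj (ψ i y) * ξ y := by
        simp_rw [finsum_mem_eq_finite_toFinset_sum _ hS, Finset.sum_mul, Finset.mul_sum]
        rw [Finset.sum_comm]
        exact Finset.sum_congr rfl fun _ _ ↦ Finset.sum_congr rfl fun _ _ ↦ by ring

theorem stmt4 {X : Type*} [TopologicalSpace X] [CompactSpace X] [T2Space X]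
    (T : X → X) (hT : IsLocalHomeomorph T) :
    ∃ (N : ℕ) (ψ : Fin N → C(X, ℂ)),
      (∀ x y : X, T x = T y →
        (x = y → ∑ i, ψ i x * conj (ψ i y) = (Nat.card (T ⁻¹' {T x}) : ℂ)) ∧
        (x ≠ y → ∑ i, ψ i x * conj (ψ i y) = 0)) ∧
      (∀ ξ : C(X, ℂ), ∀ x : X,
        ξ x = ∑ i, ψ i x * ((Nat.card (T ⁻¹' {T x}) : ℂ))⁻¹ *
          ∑ᶠ y ∈ {y : X | T y = T x}, conj (ψ i y) * ξ y) := by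
  obtain ⟨N, ψ, hdiag, hoff⟩ := exists_frame_of_isLocallyInjective hT.isLocallyInjective
    hT.continuous_natCard_fiber fun _ ↦ Nat.cast_nonneg _
  simp only [Complex.ofReal_natCast] at hdiag
  have hcard (x : X) : (Nat.card (T ⁻¹' {T x}) : ℂ) ≠ 0 :=
    Nat.cast_ne_zero.2 (Nat.card_pos_iff.2 ⟨⟨⟨x, rfl⟩⟩, (hT.finite_fiber _).to_subtype⟩).ne'
  refine ⟨N, ψ, fun x y hxy ↦ ⟨by rintro rfl; exact hdiag x, hoff x y hxy⟩, fun ξ x ↦ ?_⟩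
  exact eq_sum_mul_inv_mul_finsum_of_frame (hT.finite_fiber (T x)) rfl _ (hcard x) (hdiag x)
    (fun y hy hne ↦ hoff x y hy.symm hne.symm) ξ
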